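/- Fix a positive integer L, distinct positive integers i_1 < ... < i_g with 𝕀 = {i_1,...,i_g}, and multiplicities m_i ≥ 1 (i ∈ 𝕀), and assume p_i ≥ 0 for all i ∈ 𝕀, where p_i = L - 2 Σ_{j∈𝕀} min(i,j) m_j. Let Ĩ𝕀 = {(i,α) : i ∈ 𝕀, 1 ≤ α ≤ m_i} (of cardinality γ = Σ_i m_i). Then the γ×γ matrix A of the string center equation, with entries A_{iα,jβ} = δ_{ij}δ_{αβ}(p_i + m_i) + 2 min(i,j) - δ_{ij}, is symmetric and positive definite. -/

import Mathlib

open Matrix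

/-!
Combinatorial Bethe ansatz data.  Fix a system size `L`, distinct positive integers
`i₁ < … < i_g` (encoded by a strictly monotone `ι : Fin g → ℕ` with positive values)
and multiplicities `m : Fin g → ℕ` with `m a ≥ 1`.
-/

/-- The vacancy number `p_i = L - 2 Σ_{j ∈ 𝕀} min(i,j) m_j`. -/
def vacancy (L g : ℕ) (ι m : Fin g → ℕ) (a : Fin g) : ℤ :=
  (L : ℤ) - 2 * ∑ b : Fin g, (min (ι a) (ι b) : ℤ) * m b

/-- The matrix `A` of the string center equation, indexed by the set
`Ĩ𝕀 = {(i,α) : i ∈ 𝕀, 1 ≤ α ≤ m_i}` (of cardinality `γ = Σ_i m_i`), with entries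
`A_{iα,jβ} = δ_{ij} δ_{αβ} (p_i + m_i) + 2 min(i,j) - δ_{ij}`. -/
noncomputable def stringCenterMatrix (L g : ℕ) (ι m : Fin g → ℕ) :
    Matrix ((a : Fin g) × Fin (m a)) ((a : Fin g) × Fin (m a)) ℝ :=
  Matrix.of fun x y =>
    (if x = y then (vacancy L g ι m x.1 : ℝ) + m x.1 else 0) +
      2 * (min (ι x.1) (ι y.1) : ℝ) - (if x.1 = y.1 then 1 else 0)

/-- Auxiliary: factoring a quadratic form over a sigma type whose coefficients depend
only on the first components. -/
lemma sigma_quad_factor {g : ℕ} {m : Fin g → ℕ} (f : Fin g → Fin g → ℝ)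
    (x : ((a : Fin g) × Fin (m a)) → ℝ) :
    ∑ p : (a : Fin g) × Fin (m a), ∑ q : (a : Fin g) × Fin (m a),
      x p * (f p.1 q.1 * x q)
    = ∑ a, ∑ b, f a b * ((∑ α, x ⟨a, α⟩) * (∑ β, x ⟨b, β⟩)) := by
  rw [← Finset.univ_sigma_univ, Finset.sum_sigma]
  refine Finset.sum_congr rfl fun a _ => ?_
  rw [Finset.sum_comm, Finset.sum_sigma]
  refine Finset.sum_congr rfl fun b _ => ?_
  rw [Finset.sum_comm]
  simp only [← Finset.sum_mul, ← Finset.mul_sum]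
  ring

/-- Auxiliary: the quadratic form of the string center matrix. -/
lemma stringCenterMatrix_quad_eq (L g : ℕ) (ι m : Fin g → ℕ)
    (x : ((a : Fin g) × Fin (m a)) → ℝ) :
    x ⬝ᵥ (stringCenterMatrix L g ι m *ᵥ x) =
      (∑ a, (vacancy L g ι m a : ℝ) * ∑ α, x ⟨a, α⟩ ^ 2)
      + (∑ a, ((m a : ℝ) * ∑ α, x ⟨a, α⟩ ^ 2 - (∑ α, x ⟨a, α⟩) ^ 2))
      + ∑ a, ∑ b, 2 * (min (ι a) (ι b) : ℝ) * ((∑ α, x ⟨a, α⟩) * (∑ β, x ⟨b, β⟩)) := by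
  have step1 : x ⬝ᵥ (stringCenterMatrix L g ι m *ᵥ x)
      = ∑ p : (a : Fin g) × Fin (m a), ∑ q : (a : Fin g) × Fin (m a),
          (x p * ((if p = q then (vacancy L g ι m p.1 : ℝ) + m p.1 else 0) * x q)
           + x p * ((2 * (min (ι p.1) (ι q.1) : ℝ)) * x q)
           - x p * ((if p.1 = q.1 then (1:ℝ) else 0) * x q)) := by
    simp only [dotProduct, mulVec, stringCenterMatrix, of_apply, Finset.mul_sum]
    exact Finset.sum_congr rfl fun p _ => Finset.sum_congr rfl fun q _ => by ring
  rw [step1]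
  simp only [Finset.sum_add_distrib, Finset.sum_sub_distrib]
  have hA : ∑ p : (a : Fin g) × Fin (m a), ∑ q : (a : Fin g) × Fin (m a),
      x p * ((if p = q then (vacancy L g ι m p.1 : ℝ) + m p.1 else 0) * x q)
      = ∑ a, ((vacancy L g ι m a : ℝ) + m a) * ∑ α, x ⟨a, α⟩ ^ 2 := by
    simp only [ite_mul, zero_mul, mul_ite, mul_zero, Finset.sum_ite_eq, Finset.mem_univ,
      if_true]
    rw [← Finset.univ_sigma_univ, Finset.sum_sigma]
    refine Finset.sum_congr rfl fun a _ => ?_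
    rw [Finset.mul_sum]
    exact Finset.sum_congr rfl fun α _ => by ring
  have hB := sigma_quad_factor (fun a b => 2 * (min (ι a) (ι b) : ℝ)) x
  have hC : ∑ p : (a : Fin g) × Fin (m a), ∑ q : (a : Fin g) × Fin (m a),
      x p * ((if p.1 = q.1 then (1:ℝ) else 0) * x q)
      = ∑ a, (∑ α, x ⟨a, α⟩) ^ 2 := by
    rw [sigma_quad_factor (fun a b => if a = b then (1:ℝ) else 0) x]
    simp [ite_mul, Finset.sum_ite_eq, sq]
  rw [hA, hB, hC]
  have hsplit : ∑ a, ((vacancy L g ι m a : ℝ) + m a) * ∑ α, x ⟨a, α⟩ ^ 2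
      = ∑ a, (vacancy L g ι m a : ℝ) * ∑ α, x ⟨a, α⟩ ^ 2
        + ∑ a, (m a : ℝ) * ∑ α, x ⟨a, α⟩ ^ 2 := by
    rw [← Finset.sum_add_distrib]
    exact Finset.sum_congr rfl fun a _ => by ring
  rw [hsplit]
  ring

/-- Auxiliary: counting `k < M` in `range N`. -/
lemma sum_range_ite_lt {N M : ℕ} (hM : M ≤ N) (c : ℝ) :
    ∑ k ∈ Finset.range N, (if k < M then c else 0) = M * c := by
  calc ∑ k ∈ Finset.range N, (if k < M then c else 0)
      = ∑ k ∈ Finset.range M, (if k < M then c else 0) :=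
        (Finset.sum_subset (Finset.range_subset_range.2 hM)
          (fun k _ hk => by simp only [Finset.mem_range] at hk; simp [hk])).symm
    _ = ∑ _k ∈ Finset.range M, c :=
        Finset.sum_congr rfl fun k hk => by simp [Finset.mem_range.mp hk]
    _ = M * c := by simp [mul_comm]

/-- Auxiliary: the `min` kernel as a sum of squares. -/
lemma min_kernel_key {g : ℕ} (ι : Fin g → ℕ) (s : Fin g → ℝ) (N : ℕ)
    (hN : ∀ a, ι a ≤ N) :
    ∑ a, ∑ b, (min (ι a) (ι b) : ℝ) * (s a * s b)
      = ∑ k ∈ Finset.range N, (∑ a, if k < ι a then s a else 0) ^ 2 := by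
  have expand : ∀ k, (∑ a, if k < ι a then s a else 0) ^ 2
      = ∑ a, ∑ b, ((if k < ι a then s a else 0) * (if k < ι b then s b else 0)) := by
    intro k; rw [sq, Finset.sum_mul_sum]
  symm
  calc ∑ k ∈ Finset.range N, (∑ a, if k < ι a then s a else 0) ^ 2
      = ∑ k ∈ Finset.range N, ∑ a, ∑ b,
          ((if k < ι a then s a else 0) * (if k < ι b then s b else 0)) :=
        Finset.sum_congr rfl fun k _ => expand k
    _ = ∑ a, ∑ k ∈ Finset.range N, ∑ b,
          ((if k < ι a then s a else 0) * (if k < ι b then s b else 0)) :=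
        Finset.sum_comm
    _ = ∑ a, ∑ b, ∑ k ∈ Finset.range N,
          ((if k < ι a then s a else 0) * (if k < ι b then s b else 0)) :=
        Finset.sum_congr rfl fun a _ => Finset.sum_comm
    _ = ∑ a, ∑ b, (min (ι a) (ι b) : ℝ) * (s a * s b) := by
        refine Finset.sum_congr rfl fun a _ => Finset.sum_congr rfl fun b _ => ?_
        have h : ∀ k, (if k < ι a then s a else 0) * (if k < ι b then s b else 0)
            = if k < min (ι a) (ι b) then s a * s b else 0 := by
          intro k; by_cases h1 : k < ι a <;> by_cases h2 : k < ι b <;>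
            simp [h1, h2, lt_min_iff]
        simp only [h]
        rw [sum_range_ite_lt (le_trans (min_le_left _ _) (hN a))]
        push_cast
        ring

/-- Under the configuration condition `p_i ≥ 0` for all `i ∈ 𝕀`,
the `γ × γ` matrix `A` of the string center equation,
`A_{iα,jβ} = δ_{ij} δ_{αβ} (p_i + m_i) + 2 min(i,j) - δ_{ij}`,
is symmetric and positive definite. -/
theorem stringCenterMatrix_posDef (L g : ℕ) (hL : 0 < L) (ι : Fin g → ℕ)
    (hι : StrictMono ι) (hιpos : ∀ a, 0 < ι a) (m : Fin g → ℕ)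
    (hm : ∀ a, 1 ≤ m a) (hconf : ∀ a, 0 ≤ vacancy L g ι m a) :
    (stringCenterMatrix L g ι m).IsSymm ∧ (stringCenterMatrix L g ι m).PosDef := by
  have hsym : (stringCenterMatrix L g ι m).IsSymm := by
    refine Matrix.IsSymm.ext fun p q => ?_
    simp only [stringCenterMatrix, of_apply]
    by_cases h : p = q
    · subst h; rfl
    · have h' : ¬ q = p := fun hh => h hh.symm
      by_cases h2 : p.1 = q.1
      · simp [h, h', h2, min_comm]
      · have h2' : ¬ q.1 = p.1 := fun hh => h2 hh.symm
        simp [h, h', h2, h2', min_comm]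
  refine ⟨hsym, Matrix.posDef_iff_dotProduct_mulVec.mpr ⟨?_, ?_⟩⟩
  · -- Hermitian
    refine Matrix.ext fun p q => ?_
    rw [Matrix.conjTranspose_apply, star_trivial]
    exact hsym.apply p q
  · intro x hx
    have hstar : star x = x := by
      funext p; simp
    rw [hstar, stringCenterMatrix_quad_eq]
    set s : Fin g → ℝ := fun a => ∑ α, x ⟨a, α⟩ with hs_def
    -- nonnegativity of the three pieces
    have h1 : 0 ≤ ∑ a, (vacancy L g ι m a : ℝ) * ∑ α, x ⟨a, α⟩ ^ 2 :=
      Finset.sum_nonneg fun a _ => mul_nonneg (by exact_mod_cast hconf a)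
        (Finset.sum_nonneg fun α _ => sq_nonneg _)
    have h2each : ∀ a : Fin g,
        0 ≤ (m a : ℝ) * ∑ α, x ⟨a, α⟩ ^ 2 - (∑ α, x ⟨a, α⟩) ^ 2 := by
      intro a
      have := sq_sum_le_card_mul_sum_sq
        (s := (Finset.univ : Finset (Fin (m a)))) (f := fun α => x ⟨a, α⟩)
      simpa [Finset.card_univ] using sub_nonneg.2 this
    have h2 : 0 ≤ ∑ a, ((m a : ℝ) * ∑ α, x ⟨a, α⟩ ^ 2 - (∑ α, x ⟨a, α⟩) ^ 2) :=
      Finset.sum_nonneg fun a _ => h2each a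
    -- the min kernel
    set N : ℕ := Finset.univ.sup ι with hN_def
    have hN : ∀ a, ι a ≤ N := fun a => Finset.le_sup (Finset.mem_univ a)
    have hkey := min_kernel_key ι s N hN
    have hT3 : ∑ a, ∑ b, 2 * (min (ι a) (ι b) : ℝ) * ((∑ α, x ⟨a, α⟩) * (∑ β, x ⟨b, β⟩))
        = 2 * ∑ a, ∑ b, (min (ι a) (ι b) : ℝ) * (s a * s b) := by
      rw [Finset.mul_sum]
      refine Finset.sum_congr rfl fun a _ => ?_
      rw [Finset.mul_sum]
      refine Finset.sum_congr rfl fun b _ => ?_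
      simp only [hs_def]
      ring
    have hK0 : 0 ≤ ∑ a, ∑ b, (min (ι a) (ι b) : ℝ) * (s a * s b) := by
      rw [hkey]; exact Finset.sum_nonneg fun k _ => sq_nonneg _
    rw [hT3]
    by_cases hs : s = 0
    · -- all row sums vanish; strictness comes from the middle term
      obtain ⟨p, hp⟩ := Function.ne_iff.1 hx
      have hx2 : 0 < ∑ α, x ⟨p.1, α⟩ ^ 2 := by
        have hle : x ⟨p.1, p.2⟩ ^ 2 ≤ ∑ α, x ⟨p.1, α⟩ ^ 2 :=
          Finset.single_le_sum (f := fun α => x ⟨p.1, α⟩ ^ 2)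
            (fun α _ => sq_nonneg _) (Finset.mem_univ p.2)
        have hp' : x p ≠ 0 := by simpa using hp
        have : (0:ℝ) < x p ^ 2 :=
          lt_of_le_of_ne (sq_nonneg _) (Ne.symm (pow_ne_zero 2 hp'))
        calc (0:ℝ) < x p ^ 2 := this
          _ = x ⟨p.1, p.2⟩ ^ 2 := rfl
          _ ≤ _ := hle
      have hsp : s p.1 = 0 := by rw [hs]; rfl
      have h2' : 0 < ∑ a, ((m a : ℝ) * ∑ α, x ⟨a, α⟩ ^ 2 - (∑ α, x ⟨a, α⟩) ^ 2) := by
        refine Finset.sum_pos' (fun a _ => h2each a) ⟨p.1, Finset.mem_univ _, ?_⟩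
        have hm1 : (1:ℝ) ≤ (m p.1 : ℝ) := by exact_mod_cast hm p.1
        have hsp' : (∑ α, x ⟨p.1, α⟩) = 0 := hsp
        rw [hsp']
        nlinarith
      linarith [hK0]
    · -- some row sum is nonzero; strictness comes from the min kernel
      classical
      have hTne : (Finset.univ.filter fun a => s a ≠ 0).Nonempty := by
        obtain ⟨a, ha⟩ := Function.ne_iff.1 hs
        exact ⟨a, Finset.mem_filter.2 ⟨Finset.mem_univ a, ha⟩⟩
      set a₀ : Fin g := (Finset.univ.filter fun a => s a ≠ 0).max' hTne with ha₀_def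
      have hsa₀ : s a₀ ≠ 0 :=
        (Finset.mem_filter.1 ((Finset.univ.filter fun a => s a ≠ 0).max'_mem hTne)).2
      have hmax : ∀ a : Fin g, s a ≠ 0 → a ≤ a₀ := fun a ha =>
        Finset.le_max' _ a (Finset.mem_filter.2 ⟨Finset.mem_univ a, ha⟩)
      set k₀ : ℕ := ι a₀ - 1 with hk₀_def
      have hιa₀ : 1 ≤ ι a₀ := hιpos a₀
      have hk₀mem : k₀ ∈ Finset.range N := by
        rw [Finset.mem_range]
        have := hN a₀
        omega
      have hinner : (∑ a, if k₀ < ι a then s a else 0) = s a₀ := by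
        have hpt : ∀ a : Fin g, (if k₀ < ι a then s a else 0)
            = if a = a₀ then s a else 0 := by
          intro a
          rcases lt_trichotomy a a₀ with hlt | heq | hgt
          · have : ι a < ι a₀ := hι hlt
            have h1 : ¬ k₀ < ι a := by omega
            simp [h1, ne_of_lt hlt]
          · have hck : k₀ < ι a := by rw [heq]; omega
            rw [if_pos hck, if_pos heq]
          · have hzero : s a = 0 := by
              by_contra hne
              exact absurd (hmax a hne) (not_le.2 hgt)
            simp [hzero]
        rw [Finset.sum_congr rfl fun a _ => hpt a]
        exact Fintype.sum_ite_eq' a₀ s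
      have hKpos : 0 < ∑ a, ∑ b, (min (ι a) (ι b) : ℝ) * (s a * s b) := by
        rw [hkey]
        have hle : (∑ a, if k₀ < ι a then s a else 0) ^ 2
            ≤ ∑ k ∈ Finset.range N, (∑ a, if k < ι a then s a else 0) ^ 2 :=
          Finset.single_le_sum (f := fun k => (∑ a, if k < ι a then s a else 0) ^ 2)
            (fun k _ => sq_nonneg _) hk₀mem
        have : 0 < (∑ a, if k₀ < ι a then s a else 0) ^ 2 := by
          rw [hinner]
          exact lt_of_le_of_ne (sq_nonneg _) (Ne.symm (pow_ne_zero 2 hsa₀))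
        linarith
      linarith [h1, h2, hKpos]
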